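/- Let n ≥ 1, i ∈ {1,…,n}, let Ω ⊆ ℝ² be open with coordinates (x,t), and let λ = (λ_1,…,λ_n) : Ω → ℝ^n be smooth and satisfy the i-th Killing system in λ-coordinates, ∂λ_j/∂t = −(∂q_i/∂λ_j)(λ) · ∂λ_j/∂x for every j = 1,…,n. Then the functions q_j := q_j(λ(x,t)) satisfy the i-th Killing system in Viète coordinates: ∂q_j/∂t = (Z_i[q])^j = ∂_x q_{j+i−1} + ∑_{k=1}^{j−1} (q_k ∂_x q_{j+i−k−1} − q_{j+i−k−1} ∂_x q_k) for every j = 1,…,n (with q_α := 0 for α > n). -/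

import Mathlib

noncomputable section

/-- Viète polynomial `q_i(λ) = (-1)^i e_i(λ)`; by convention `q_0 = 1` and `q_i = 0` for `i > n`. -/
def viete {n : ℕ} (i : ℕ) (lam : Fin n → ℝ) : ℝ :=
  (-1 : ℝ) ^ i * ∑ s ∈ Finset.powersetCard i (Finset.univ : Finset (Fin n)), ∏ j ∈ s, lam j

/-- The partial derivative `∂q_i/∂λ_j` of the `i`-th Viète polynomial. -/
def vieteD {n : ℕ} (i : ℕ) (lam : Fin n → ℝ) (j : Fin n) : ℝ :=
  fderiv ℝ (viete i) lam (Pi.single j 1)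

/-- `Δ_j(λ) = ∏_{s ≠ j} (λ_j - λ_s)`. -/
def Delta {n : ℕ} (lam : Fin n → ℝ) (j : Fin n) : ℝ :=
  ∏ s ∈ Finset.univ.erase j, (lam j - lam s)

/-- The `j`-th component of the `i`-th Killing vector field in Viète coordinates,
`(Z_i[q])^j = ∂_x q_{j+i-1} + ∑_{k=1}^{j-1} (q_k ∂_x q_{j+i-k-1} - q_{j+i-k-1} ∂_x q_k)`,
with the convention `q_α := 0` for `α > n`; `Q` are the values, `Qx` the `x`-derivatives. -/
def killingZ (n i j : ℕ) (Q Qx : ℕ → ℝ) : ℝ :=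
  (if j + i - 1 ≤ n then Qx (j + i - 1) else 0) +
    ∑ k ∈ Finset.Icc 1 (j - 1),
      ((if k ≤ n then Q k else 0) * (if j + i - k - 1 ≤ n then Qx (j + i - k - 1) else 0) -
        (if j + i - k - 1 ≤ n then Q (j + i - k - 1) else 0) * (if k ≤ n then Qx k else 0))

/-! Along a solution, `∂_t q_j = ∑_m ∂q_j/∂λ_m · ∂_t λ_m` and the Killing vector field is linear in
`∂_x q = ∑_m ∂q/∂λ_m · ∂_x λ_m`, so the theorem reduces, for each `m`, to the polynomial identity
`Z_i^j[q](∂q/∂λ_m) = -∂q_j/∂λ_m · ∂q_i/∂λ_m`. Write `q̂_a` for the Viète polynomials of `λ` with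
`λ_m` deleted. Then `q_{a+1} = q̂_{a+1} - λ_m q̂_a`, hence `∂q_{a+1}/∂λ_m = -q̂_a` and
`q_a = q̂_a + λ_m ∂q_a/∂λ_m`; with these substitutions the identity telescopes. -/

open Finset

theorem Multiset.esymm_cons_succ {R : Type*} [CommSemiring R] (x : R) (s : Multiset R) (k : ℕ) :
    (x ::ₘ s).esymm (k + 1) = s.esymm (k + 1) + x * s.esymm k := by
  simp [Multiset.esymm, Multiset.powersetCard_cons, Multiset.sum_map_mul_left]

theorem fderiv_comp_apply_eq_sum {𝕜 E ι : Type*} [NontriviallyNormedField 𝕜]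
    [NormedAddCommGroup E] [NormedSpace 𝕜 E] [Fintype ι] [DecidableEq ι] {f : (ι → 𝕜) → 𝕜}
    {g : E → ι → 𝕜} {p : E} (hf : DifferentiableAt 𝕜 f (g p)) (hg : DifferentiableAt 𝕜 g p)
    (v : E) :
    fderiv 𝕜 (fun s => f (g s)) p v =
      ∑ m, fderiv 𝕜 f (g p) (Pi.single m 1) * fderiv 𝕜 (fun s => g s m) p v := by
  rw [fderiv_fun_comp p hf hg, ContinuousLinearMap.comp_apply, pi_eq_sum_univ' (fderiv 𝕜 g p v),
    map_sum]
  refine sum_congr rfl fun m _ => ?_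
  rw [map_smul, smul_eq_mul, mul_comm, fderiv_apply hg]
  rfl

theorem killingZ_sum_mul {ι : Type*} (s : Finset ι) (n i j : ℕ) (Q : ℕ → ℝ) (D : ℕ → ι → ℝ)
    (X : ι → ℝ) :
    killingZ n i j Q (fun a => ∑ m ∈ s, D a m * X m) =
      ∑ m ∈ s, killingZ n i j Q (fun a => D a m) * X m := by
  simp only [killingZ, add_mul, sum_add_distrib, sum_mul, sub_mul, sum_sub_distrib, ite_mul,
    zero_mul, mul_ite, mul_zero, sum_ite_irrel, sum_const_zero, mul_sum, mul_assoc]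
  rw [sum_comm (s := s), sum_comm (s := s)]
  simp only [sum_ite_irrel, sum_const_zero]

theorem killingZ_of_eq_zero {n : ℕ} (i j : ℕ) {Q Qx : ℕ → ℝ}
    (hQ : ∀ a, n < a → Q a = 0) (hQx : ∀ a, n < a → Qx a = 0) :
    killingZ n i j Q Qx = Qx (j + i - 1) +
      ∑ k ∈ Icc 1 (j - 1), (Q k * Qx (j + i - k - 1) - Q (j + i - k - 1) * Qx k) := by
  have unguard : ∀ f : ℕ → ℝ, (∀ a, n < a → f a = 0) → ∀ a, (if a ≤ n then f a else 0) = f a :=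
    fun f hf a => by split_ifs with h; rfl; exact (hf a (by omega)).symm
  simp only [killingZ, unguard Q hQ, unguard Qx hQx]

/-- The `x`-terms cancel in each bracket, which then telescopes:
`Q (k+1) D r - Q r D (k+1) = H k H r - H (k+1) H (r-1)`. -/
theorem killing_identity {R : Type*} [CommRing R] {Q H D : ℕ → R} {x : R}
    (hQ : ∀ a, Q a = H a + x * D a) (hD : ∀ a, D (a + 1) = -H a) (hH : H 0 = 1) {i j : ℕ}
    (hi : 1 ≤ i) (hj : 1 ≤ j) :
    D (j + i - 1) + ∑ k ∈ Icc 1 (j - 1), (Q k * D (j + i - k - 1) - Q (j + i - k - 1) * D k) =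
      -(D j * D i) := by
  obtain ⟨i, rfl⟩ := Nat.exists_eq_add_of_le' hi
  obtain ⟨j, rfl⟩ := Nat.exists_eq_add_of_le' hj
  have summand : ∀ k ∈ range j,
      Q (1 + k) * D (j + 1 + (i + 1) - (1 + k) - 1) -
          Q (j + 1 + (i + 1) - (1 + k) - 1) * D (1 + k) =
        H k * H (j + i - k) - H (k + 1) * H (j + i - (k + 1)) := by
    intro k hk
    have := mem_range.mp hk
    rw [show j + 1 + (i + 1) - (1 + k) - 1 = (j + i - (k + 1)) + 1 by omega, add_comm 1 k, hQ, hQ,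
      hD, hD, show j + i - (k + 1) + 1 = j + i - k by omega]
    ring
  rw [show j + 1 + (i + 1) - 1 = (j + i) + 1 by omega, ← Ico_add_one_right_eq_Icc,
    sum_Ico_eq_sum_range, Nat.add_sub_cancel, Nat.add_sub_cancel, sum_congr rfl summand,
    sum_range_sub' (fun k => H k * H (j + i - k)), hD, hD, hD, Nat.sub_zero,
    Nat.add_sub_cancel_left, hH]
  ring

def vieteErase {n : ℕ} (m : Fin n) (a : ℕ) (lam : Fin n → ℝ) : ℝ :=
  (-1 : ℝ) ^ a * ((univ.erase m).val.map lam).esymm a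

section Viete

variable {n : ℕ}

theorem viete_eq_esymm (a : ℕ) (lam : Fin n → ℝ) :
    viete a lam = (-1) ^ a * (univ.val.map lam).esymm a := by
  rw [viete, Finset.esymm_map_val]

theorem viete_zero (lam : Fin n → ℝ) : viete 0 lam = 1 := by
  simp [viete]

theorem viete_eq_zero_of_lt {a : ℕ} (h : n < a) (lam : Fin n → ℝ) : viete a lam = 0 := by
  rw [viete, powersetCard_eq_empty.mpr (by simpa using h), sum_empty, mul_zero]

theorem differentiable_viete (a : ℕ) : Differentiable ℝ (viete (n := n) a) := by
  unfold viete
  fun_prop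

theorem vieteErase_zero (m : Fin n) (lam : Fin n → ℝ) : vieteErase m 0 lam = 1 := by
  simp [vieteErase, Multiset.esymm]

theorem vieteErase_update (m : Fin n) (a : ℕ) (lam : Fin n → ℝ) (x : ℝ) :
    vieteErase m a (Function.update lam m x) = vieteErase m a lam := by
  rw [vieteErase, vieteErase, Multiset.map_congr rfl]
  intro j hj
  exact Function.update_of_ne (ne_of_mem_erase (mem_val.mp hj)) _ _

theorem viete_succ (m : Fin n) (a : ℕ) (lam : Fin n → ℝ) :
    viete (a + 1) lam = vieteErase m (a + 1) lam - lam m * vieteErase m a lam := by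
  have hcons : univ.val.map lam = lam m ::ₘ (univ.erase m).val.map lam := by
    rw [← Multiset.map_cons, erase_val, Multiset.cons_erase (mem_univ_val m)]
  rw [viete_eq_esymm, hcons, Multiset.esymm_cons_succ, vieteErase, vieteErase, pow_succ]
  ring

theorem vieteD_zero (lam : Fin n → ℝ) (m : Fin n) : vieteD 0 lam m = 0 := by
  rw [vieteD, show viete 0 = fun _ => (1 : ℝ) from funext viete_zero, fderiv_const_apply]
  rfl

theorem vieteD_succ (a : ℕ) (lam : Fin n → ℝ) (m : Fin n) :
    vieteD (a + 1) lam m = -vieteErase m a lam := by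
  have line : ∀ t : ℝ, viete (a + 1) (lam + t • Pi.single m 1) =
      vieteErase m (a + 1) lam - (lam m + t) * vieteErase m a lam := by
    intro t
    rw [show lam + t • Pi.single m 1 = Function.update lam m (lam m + t) by
        ext j; rcases eq_or_ne j m with rfl | h <;> simp [*],
      viete_succ m, vieteErase_update, vieteErase_update, Function.update_self]
  have hline : HasDerivAt (fun t : ℝ => vieteErase m (a + 1) lam - (lam m + t) * vieteErase m a lam)
      (-(1 * vieteErase m a lam)) 0 :=
    (((hasDerivAt_id' 0).const_add _).mul_const _).const_sub _
  rw [vieteD, ← (differentiable_viete _ _).lineDeriv_eq_fderiv, lineDeriv]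
  simp only [line, hline.deriv, one_mul]

theorem vieteD_eq_zero_of_lt {a : ℕ} (h : n < a) (lam : Fin n → ℝ) (m : Fin n) :
    vieteD a lam m = 0 := by
  rw [vieteD, show viete a = fun _ => (0 : ℝ) from funext (viete_eq_zero_of_lt h),
    fderiv_const_apply]
  rfl

theorem viete_eq_vieteErase_add_mul_vieteD (m : Fin n) (a : ℕ) (lam : Fin n → ℝ) :
    viete a lam = vieteErase m a lam + lam m * vieteD a lam m := by
  cases a with
  | zero => rw [viete_zero, vieteErase_zero, vieteD_zero, mul_zero, add_zero]
  | succ a => rw [viete_succ m, vieteD_succ]; ring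

theorem killingZ_vieteD {i j : ℕ} (hi : 1 ≤ i) (hj : 1 ≤ j) (lam : Fin n → ℝ) (m : Fin n) :
    killingZ n i j (fun a => viete a lam) (fun a => vieteD a lam m) =
      -(vieteD j lam m * vieteD i lam m) := by
  rw [killingZ_of_eq_zero i j (fun a ha => viete_eq_zero_of_lt ha lam)
    (fun a ha => vieteD_eq_zero_of_lt ha lam m)]
  exact killing_identity (viete_eq_vieteErase_add_mul_vieteD m · lam) (vieteD_succ · lam m)
    (vieteErase_zero m lam) hi hj

end Viete

theorem killing_system_in_viete_coordinates_general (n : ℕ) (i : ℕ)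
    (hi1 : 1 ≤ i) (Ω : Set (ℝ × ℝ)) (hΩ : IsOpen Ω)
    (lam : ℝ × ℝ → Fin n → ℝ) (hsmooth : ContDiffOn ℝ (⊤ : ℕ∞) lam Ω)
    (hkill : ∀ p ∈ Ω, ∀ j : Fin n,
      fderiv ℝ (fun s => lam s j) p ((0 : ℝ), (1 : ℝ)) =
        -vieteD i (lam p) j * fderiv ℝ (fun s => lam s j) p ((1 : ℝ), (0 : ℝ))) :
    ∀ p ∈ Ω, ∀ j, 1 ≤ j → j ≤ n →
      fderiv ℝ (fun s => viete j (lam s)) p ((0 : ℝ), (1 : ℝ)) =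
        killingZ n i j (fun a => viete a (lam p))
          (fun a => fderiv ℝ (fun s => viete a (lam s)) p ((1 : ℝ), (0 : ℝ))) := by
  intro p hp j hj _
  have hlam : DifferentiableAt ℝ lam p :=
    (hsmooth.differentiableOn (by simp)).differentiableAt (hΩ.mem_nhds hp)
  have chain : ∀ a v, fderiv ℝ (fun s => viete a (lam s)) p v =
      ∑ m, vieteD a (lam p) m * fderiv ℝ (fun s => lam s m) p v :=
    fun a => fderiv_comp_apply_eq_sum (differentiable_viete a _) hlam
  simp only [chain, killingZ_sum_mul]
  refine sum_congr rfl fun m _ => ?_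
  rw [hkill p hp m, killingZ_vieteD hi1 hj]
  ring

theorem killing_system_in_viete_coordinates (n : ℕ) (hn : 1 ≤ n) (i : ℕ)
    (hi1 : 1 ≤ i) (hi2 : i ≤ n) (Ω : Set (ℝ × ℝ)) (hΩ : IsOpen Ω)
    (lam : ℝ × ℝ → Fin n → ℝ) (hsmooth : ContDiffOn ℝ (⊤ : ℕ∞) lam Ω)
    (hkill : ∀ p ∈ Ω, ∀ j : Fin n,
      fderiv ℝ (fun s => lam s j) p ((0 : ℝ), (1 : ℝ)) =
        -vieteD i (lam p) j * fderiv ℝ (fun s => lam s j) p ((1 : ℝ), (0 : ℝ))) :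
    ∀ p ∈ Ω, ∀ j, 1 ≤ j → j ≤ n →
      fderiv ℝ (fun s => viete j (lam s)) p ((0 : ℝ), (1 : ℝ)) =
        killingZ n i j (fun a => viete a (lam p))
          (fun a => fderiv ℝ (fun s => viete a (lam s)) p ((1 : ℝ), (0 : ℝ))) :=
  killing_system_in_viete_coordinates_general n i hi1 Ω hΩ lam hsmooth hkill
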